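/- Transience of the random walk: let μ be a probability measure on I with μ(ε) < 1. Then ρ = Σ_{y ∈ I} μ(y)·dim₁(y)/dim_q(y) satisfies 0 < ρ < 1, and Σ_{n=1}^∞ p_n(x, y) < ∞ for all x, y ∈ I. -/

import Mathlib

/-
The function `h(x) = dim₁(x)/dim_q(x)` is an eigenfunction of the transition operator:
`Σ_y p(x,y) h(y) = ρ h(x)`. Indeed `dim₁` is a dimension function for the fusion rules,
`Σ_z m(z; x, y) dim₁(z) = dim₁(x) dim₁(y)`, and Frobenius reciprocity `m(z; x̄, y) = m(y; x, z)`
turns the sum over `y` into a sum over the fusion of `x` and `z`. Iterating (all terms are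
nonnegative, so the double series may be summed in either order), `Σ_y p_n(x,y) h(y) = ρⁿ h(x)`,
hence `p_n(x,y) ≤ ρⁿ h(x)/h(y)`. Since `[n]_q > n` for `n ≥ 2`, `h < 1` away from `ε`, so
`0 < ρ < 1` as soon as `μ(ε) < 1`, and the bound is geometric.
-/

open Filter Topology MeasureTheory

/-- Words in the free monoid on two letters `α = true`, `β = false`. -/
abbrev Word := List Bool

/-- Conjugation: reverse the word and swap the two letters. -/
def wconj (x : Word) : Word := x.reverse.map (fun b => !b)

/-- Fusion multiplicity `m(z; x, y)`: the number of triples `(x₀, w, y₀)` with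
`x = x₀w`, `y = w̄y₀` and `z = x₀y₀`. -/
def fm (x y z : Word) : ℕ :=
  ((Finset.range (x.length + 1)).filter (fun k =>
    wconj (x.drop k) <+: y ∧ z = x.take k ++ y.drop (x.length - k))).card

/-- Maximal alternating blocks of a word. -/
def blocks : Word → List Word
  | [] => []
  | a :: rest =>
    match blocks rest with
    | [] => [[a]]
    | b :: bs => if b.head? = some a then [a] :: b :: bs else (a :: b) :: bs

/-- The quantum integer `[n]_q = (qⁿ - q⁻ⁿ)/(q - q⁻¹)`. -/
noncomputable def qnum (q : ℝ) (n : ℕ) : ℝ := (q ^ n - q⁻¹ ^ n) / (q - q⁻¹)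

/-- Quantum dimension `dim_q(x) = ∏ᵢ [|xᵢ|+1]_q` over the maximal alternating blocks. -/
noncomputable def dimq (q : ℝ) (x : Word) : ℝ :=
  ((blocks x).map (fun b => qnum q (b.length + 1))).prod

/-- Classical dimension `dim₁(x) = ∏ᵢ (|xᵢ|+1)` over the maximal alternating blocks. -/
def dim1 (x : Word) : ℕ := ((blocks x).map (fun b => b.length + 1)).prod
/-- The transition kernel of the random walk on `I` associated with a probability
measure `μ`: `p(x,y) = Σ_z μ(z)·m(z; x̄, y)·dim_q(y)/(dim_q(x)·dim_q(z))`. -/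
noncomputable def pker (q : ℝ) (μ : Word → ℝ) (x y : Word) : ℝ :=
  ∑ᶠ z : Word, μ z * (fm (wconj x) y z : ℝ) * dimq q y / (dimq q x * dimq q z)

/-- The `n`-step transition probabilities: `p₁ = p` and
`p_{n+1}(x,y) = Σ_u p_n(x,u)·p(u,y)`.  (The value at `n = 0` is irrelevant.) -/
noncomputable def pn (q : ℝ) (μ : Word → ℝ) : ℕ → Word → Word → ℝ
  | 0, _, _ => 0
  | 1, x, y => pker q μ x y
  | n + 2, x, y => ∑' u : Word, pn q μ (n + 1) x u * pker q μ u y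

/-- `ρ = Σ_y μ(y)·dim₁(y)/dim_q(y)`. -/
noncomputable def rho (q : ℝ) (μ : Word → ℝ) : ℝ := ∑' y : Word, μ y * (dim1 y : ℝ) / dimq q y

theorem hasSum_tsum_swap_of_nonneg {α β : Type*} {F : α → β → ℝ} (hF : ∀ a b, 0 ≤ F a b)
    {g : α → ℝ} {s : ℝ} (hrows : ∀ a, HasSum (F a) (g a)) (hg : HasSum g s) :
    HasSum (fun b => ∑' a, F a b) s := by
  have hsum : Summable (fun p : α × β => F p.1 p.2) :=
    (summable_prod_of_nonneg fun p => hF p.1 p.2).2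
      ⟨fun a => (hrows a).summable, hg.summable.congr fun a => (hrows a).tsum_eq.symm⟩
  have htotal : HasSum (fun p : α × β => F p.1 p.2) s := by
    simpa only [(hsum.hasSum.prod_fiberwise hrows).unique hg] using hsum.hasSum
  have hswap : HasSum (fun p : β × α => F p.2 p.1) s :=
    (Equiv.prodComm β α).hasSum_iff.2 htotal
  exact hswap.prod_fiberwise fun b => (hswap.summable.prod_factor b).hasSum

theorem List.IsPrefix.and_eq_append_drop_swap {α : Type*} {a b y z : List α} {m n : ℕ}
    (ha : a.length = m) (hb : b.length = n) (hay : a <+: y) (hz : z = b ++ y.drop m) :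
    b <+: z ∧ y = a ++ z.drop n := by
  subst ha hb hz
  exact ⟨List.prefix_append _ _, by rw [List.drop_left, List.prefix_iff_eq_append.1 hay]⟩

theorem two_le_add_inv {a : ℝ} (ha : 0 < a) : 2 ≤ a + a⁻¹ := by
  have h : a + a⁻¹ - 2 = (a - 1) ^ 2 / a := by field_simp; ring
  linarith [div_nonneg (sq_nonneg (a - 1)) ha.le]

theorem two_lt_add_inv {a : ℝ} (ha : 0 < a) (ha1 : a ≠ 1) : 2 < a + a⁻¹ := by
  have h : a + a⁻¹ - 2 = (a - 1) ^ 2 / a := by field_simp; ring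
  linarith [div_pos (pow_two_pos_of_ne_zero (sub_ne_zero.2 ha1)) ha]

@[simp] theorem wconj_nil : wconj [] = [] := rfl

@[simp] theorem wconj_length (x : Word) : (wconj x).length = x.length := by simp [wconj]

@[simp] theorem wconj_wconj (x : Word) : wconj (wconj x) = x := by
  simp [wconj, List.map_reverse, Function.comp_def]

theorem wconj_append_singleton (u : Word) (c : Bool) : wconj (u ++ [c]) = (!c) :: wconj u := by
  simp [wconj]

theorem wconj_drop (x : Word) (k : ℕ) : (wconj x).drop k = wconj (x.take (x.length - k)) := by
  simp [wconj, List.drop_reverse, ← List.map_take]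

theorem wconj_take (x : Word) (k : ℕ) : (wconj x).take k = wconj (x.drop (x.length - k)) := by
  simp [wconj, List.take_reverse, ← List.map_drop]

theorem blocks_eq_nil_iff {w : Word} : blocks w = [] ↔ w = [] := by
  refine ⟨fun h => ?_, fun h => h ▸ rfl⟩
  cases w with
  | nil => rfl
  | cons a r =>
    simp only [blocks] at h
    split at h
    · simp at h
    · split_ifs at h

theorem head?_of_blocks_eq_cons {w b : Word} {bs : List Word} (h : blocks w = b :: bs) :
    b.head? = w.head? := by
  cases w with
  | nil => simp [blocks] at h
  | cons a r =>
    simp only [blocks] at h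
    split at h
    · obtain ⟨rfl, -⟩ := List.cons.inj h
      rfl
    · split_ifs at h <;> obtain ⟨rfl, -⟩ := List.cons.inj h <;> rfl

theorem ne_nil_of_mem_blocks {w b : Word} (hb : b ∈ blocks w) : b ≠ [] := by
  induction w with
  | nil => simp [blocks] at hb
  | cons a r ih =>
    simp only [blocks] at hb
    split at hb
    · simp_all
    · split_ifs at hb <;>
        rcases List.mem_cons.1 hb with rfl | hb <;> simp_all

def dim1Tail (w : Word) : ℕ := ((blocks w).tail.map (fun b => b.length + 1)).prod

@[simp] theorem dim1_nil : dim1 [] = 1 := rfl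

@[simp] theorem dim1Tail_nil : dim1Tail [] = 1 := rfl

theorem dim1Tail_cons (c : Bool) (w : Word) :
    dim1Tail (c :: w) = if w.head? = some c then dim1 w else dim1Tail w := by
  rcases hw : blocks w with _ | ⟨b, bs⟩
  · simp [blocks_eq_nil_iff.1 hw, dim1Tail, blocks]
  · have hb := head?_of_blocks_eq_cons hw
    simp only [dim1Tail, dim1, blocks, hw, ← hb]
    split_ifs <;> rfl

theorem dim1_cons (c : Bool) (w : Word) : dim1 (c :: w) = dim1 w + dim1Tail (c :: w) := by
  rcases hw : blocks w with _ | ⟨b, bs⟩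
  · simp [blocks_eq_nil_iff.1 hw, dim1Tail, dim1, blocks]
  · have hb := head?_of_blocks_eq_cons hw
    simp only [dim1Tail, dim1, blocks, hw]
    split_ifs <;> simp <;> ring

theorem dim1Tail_cons_eq_ite (c a : Bool) (x : Word) :
    dim1Tail (c :: x) = if (x ++ [a]).head? = some c then dim1 x else dim1Tail x := by
  cases x <;> simp [dim1Tail_cons]

/- For `b = !a` the last block of `x ++ [a]` (length `l₁`) and the first block of `b :: y`
(length `l₂`) merge into one: `(l₁ + 1)(l₂ + 1) = (l₁ + l₂ + 1) + l₁ l₂`. -/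
theorem dim1_append_singleton_mul_dim1_cons (a b : Bool) (x y : Word) :
    dim1 (x ++ [a]) * dim1 (b :: y) =
      dim1 (x ++ a :: b :: y) + if b = !a then dim1 x * dim1 y else 0 := by
  set δ := if b = !a then dim1 y else 0 with hδ
  -- Prepending a letter changes `dim₁` only through the first block, so `dim1Tail` comes along.
  suffices h : ∀ x : Word,
      dim1 (x ++ [a]) * dim1 (b :: y) = dim1 (x ++ a :: b :: y) + dim1 x * δ ∧
      dim1Tail (x ++ [a]) * dim1 (b :: y) = dim1Tail (x ++ a :: b :: y) + dim1Tail x * δ by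
    rw [(h x).1, hδ, mul_ite, mul_zero]
  intro x
  induction x with
  | nil =>
    have hT : dim1Tail [a] * dim1 (b :: y) = dim1Tail (a :: b :: y) + δ := by
      rw [dim1Tail_cons, dim1Tail_cons a, dim1_cons b y]
      obtain rfl | rfl : b = a ∨ b = !a := by cases a <;> cases b <;> simp
      · simp [hδ]
      · simp [hδ, add_comm]
    simp only [List.nil_append, dim1_nil, dim1Tail_nil, one_mul]
    refine ⟨?_, hT⟩
    rw [dim1_cons a [], dim1_cons a (b :: y), add_mul, hT]
    simp [add_assoc]
  | cons c x ih =>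
    have hhead : (x ++ a :: b :: y).head? = (x ++ [a]).head? := by cases x <;> rfl
    have hT : dim1Tail (c :: x ++ [a]) * dim1 (b :: y) =
        dim1Tail (c :: x ++ a :: b :: y) + dim1Tail (c :: x) * δ := by
      simp only [List.cons_append, dim1Tail_cons, dim1Tail_cons_eq_ite c a x, hhead]
      split_ifs
      exacts [ih.1, ih.2]
    refine ⟨?_, hT⟩
    simp only [List.cons_append] at hT ⊢
    rw [dim1_cons c (x ++ [a]), dim1_cons c (x ++ a :: b :: y), dim1_cons c x, add_mul, add_mul,
      ih.1, hT]
    ring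

def fusionIdx (x y : Word) : Finset ℕ :=
  (Finset.range (x.length + 1)).filter (fun k => wconj (x.drop k) <+: y)

def fuse (x y : Word) (k : ℕ) : Word := x.take k ++ y.drop (x.length - k)

theorem fusionIdx_nil (x : Word) : fusionIdx x [] = {x.length} := by
  ext k
  simp only [fusionIdx, Finset.mem_filter, Finset.mem_range, List.prefix_nil, wconj,
    List.map_eq_nil_iff, List.reverse_eq_nil_iff, List.drop_eq_nil_iff, Finset.mem_singleton]
  omega

theorem wconj_drop_append_singleton_prefix_cons_iff {x y : Word} {c b : Bool} {k : ℕ}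
    (hk : k ≤ x.length) :
    wconj ((x ++ [c]).drop k) <+: b :: y ↔ b = !c ∧ wconj (x.drop k) <+: y := by
  rw [List.drop_append_of_le_length hk, wconj_append_singleton, List.cons_prefix_cons, eq_comm]

theorem sum_fusionIdx_append_singleton_cons {M : Type*} [AddCommMonoid M] (x y : Word)
    (c b : Bool) (f : ℕ → M) :
    ∑ k ∈ fusionIdx (x ++ [c]) (b :: y), f k =
      f (x.length + 1) + if b = !c then ∑ k ∈ fusionIdx x y, f k else 0 := by
  have hlast : (x ++ [c]).drop (x.length + 1) = [] := List.drop_eq_nil_of_le (by simp)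
  rw [fusionIdx, Finset.sum_filter, List.length_append, List.length_singleton,
    Finset.sum_range_succ, hlast, wconj_nil, if_pos List.nil_prefix, add_comm, fusionIdx,
    Finset.sum_filter]
  congr 1
  split_ifs with hb
  · refine Finset.sum_congr rfl fun k hk => ?_
    simp [wconj_drop_append_singleton_prefix_cons_iff (Finset.mem_range_succ_iff.1 hk), hb]
  · refine Finset.sum_eq_zero fun k hk => ?_
    simp [wconj_drop_append_singleton_prefix_cons_iff (Finset.mem_range_succ_iff.1 hk), hb]

theorem sum_dim1_fuse (x y : Word) :
    ∑ k ∈ fusionIdx x y, dim1 (fuse x y k) = dim1 x * dim1 y := by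
  induction y generalizing x with
  | nil => simp [fusionIdx_nil, fuse]
  | cons b y ih =>
    rcases List.eq_nil_or_concat' x with rfl | ⟨x, c, rfl⟩
    · simp [fusionIdx, fuse, wconj]
    · have hfuse : ∀ k ≤ x.length, fuse (x ++ [c]) (b :: y) k = fuse x y k := by
        intro k hk
        rw [fuse, fuse, List.take_append_of_le_length hk, List.length_append, List.length_singleton,
          Nat.sub_add_comm hk, List.drop_succ_cons]
      have hlast : fuse (x ++ [c]) (b :: y) (x.length + 1) = x ++ c :: b :: y := by
        simp [fuse, List.take_of_length_le]
      rw [sum_fusionIdx_append_singleton_cons, hlast, dim1_append_singleton_mul_dim1_cons, ← ih x]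
      congr 2
      refine Finset.sum_congr rfl fun k hk => ?_
      exact congrArg dim1
        (hfuse k (Nat.lt_succ_iff.1 (Finset.mem_range.1 (Finset.mem_filter.1 hk).1)))

theorem fm_eq_card_filter (x y z : Word) :
    fm x y z = ((fusionIdx x y).filter (fun k => z = fuse x y k)).card := by
  rw [fusionIdx, Finset.filter_filter]
  rfl

theorem hasSum_fm_mul (x y : Word) (g : Word → ℝ) :
    HasSum (fun z => (fm x y z : ℝ) * g z) (∑ k ∈ fusionIdx x y, g (fuse x y k)) := by
  have h : ∀ z, (fm x y z : ℝ) * g z =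
      ∑ k ∈ fusionIdx x y, if z = fuse x y k then g (fuse x y k) else 0 := by
    intro z
    rw [fm_eq_card_filter, Finset.card_filter, Nat.cast_sum, Finset.sum_mul]
    refine Finset.sum_congr rfl fun k _ => ?_
    split_ifs with hz <;> simp [hz]
  simpa only [h] using hasSum_sum fun k _ => hasSum_ite_eq (fuse x y k) (g (fuse x y k))

theorem support_fm_subset (x y : Word) :
    Function.support (fm x y) ⊆ (fusionIdx x y).image (fuse x y) := by
  intro z hz
  rw [Function.mem_support, fm_eq_card_filter, Finset.card_ne_zero] at hz
  obtain ⟨k, hk⟩ := hz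
  rw [Finset.mem_filter] at hk
  exact Finset.mem_image.2 ⟨k, hk.1, hk.2.symm⟩

theorem fusion_cond_wconj_iff (x y z : Word) {k : ℕ} (hk : k ≤ x.length) :
    (wconj ((wconj x).drop k) <+: y ∧ z = (wconj x).take k ++ y.drop (x.length - k)) ↔
      (wconj (x.drop (x.length - k)) <+: z ∧ y = x.take (x.length - k) ++ z.drop k) := by
  have hlen₁ : (x.take (x.length - k)).length = x.length - k := List.length_take_of_le (by omega)
  have hlen₂ : (wconj (x.drop (x.length - k))).length = k := by simp; omega
  rw [wconj_drop, wconj_take, wconj_wconj]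
  constructor
  · rintro ⟨hy, hz⟩
    exact hy.and_eq_append_drop_swap hlen₁ hlen₂ hz
  · rintro ⟨hz, hy⟩
    exact hz.and_eq_append_drop_swap hlen₂ hlen₁ hy

theorem fm_wconj_left (x y z : Word) : fm (wconj x) y z = fm x z y := by
  unfold fm
  simp only [wconj_length]
  apply Finset.card_nbij' (x.length - ·) (x.length - ·)
  · intro k hk
    simp only [Finset.coe_filter, Finset.mem_range, Set.mem_ofPred_eq] at hk ⊢
    have := (fusion_cond_wconj_iff x y z (by omega)).1 hk.2
    rw [Nat.sub_sub_self (by omega)]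
    exact ⟨by omega, this⟩
  · intro j hj
    simp only [Finset.coe_filter, Finset.mem_range, Set.mem_ofPred_eq] at hj ⊢
    refine ⟨by omega, (fusion_cond_wconj_iff x y z (Nat.sub_le _ _)).2 ?_⟩
    rw [Nat.sub_sub_self (by omega)]
    exact hj.2
  all_goals
    intro k hk
    simp only [Finset.coe_filter, Finset.mem_range, Set.mem_ofPred_eq] at hk
    exact Nat.sub_sub_self (by omega)

section QNumbers

variable {q : ℝ}

theorem sub_inv_ne_zero (hq0 : 0 < q) (hq1 : q ≠ 1) : q - q⁻¹ ≠ 0 := by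
  have : q - q⁻¹ = (q - 1) * (q + 1) / q := by field_simp; ring
  rw [this]
  exact div_ne_zero (mul_ne_zero (sub_ne_zero.2 hq1) (by linarith)) hq0.ne'

theorem qnum_succ (hq : q - q⁻¹ ≠ 0) (n : ℕ) :
    qnum q (n + 1) = (q + q⁻¹) / 2 * qnum q n + (q ^ n + q⁻¹ ^ n) / 2 := by
  have key : q ^ (n + 1) - q⁻¹ ^ (n + 1) =
      (q + q⁻¹) / 2 * (q ^ n - q⁻¹ ^ n) + (q ^ n + q⁻¹ ^ n) / 2 * (q - q⁻¹) := by ring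
  rw [qnum, qnum, key, add_div, mul_div_assoc, mul_div_cancel_right₀ _ hq]

theorem natCast_le_qnum (hq0 : 0 < q) (hq1 : q ≠ 1) (n : ℕ) : (n : ℝ) ≤ qnum q n := by
  induction n with
  | zero => simp [qnum]
  | succ n ih =>
    have hc := two_le_add_inv hq0
    have hd : 2 ≤ q ^ n + q⁻¹ ^ n := by rw [inv_pow]; exact two_le_add_inv (pow_pos hq0 n)
    rw [qnum_succ (sub_inv_ne_zero hq0 hq1)]
    push_cast
    nlinarith [(Nat.cast_nonneg n : (0 : ℝ) ≤ n)]

theorem natCast_lt_qnum (hq0 : 0 < q) (hq1 : q ≠ 1) {n : ℕ} (hn : 2 ≤ n) :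
    (n : ℝ) < qnum q n := by
  obtain ⟨m, rfl⟩ : ∃ m, n = m + 1 := ⟨n - 1, by omega⟩
  have hc := two_lt_add_inv hq0 hq1
  have hd : 2 ≤ q ^ m + q⁻¹ ^ m := by rw [inv_pow]; exact two_le_add_inv (pow_pos hq0 m)
  have hm : (1 : ℝ) ≤ m := by exact_mod_cast (by omega : 1 ≤ m)
  have := natCast_le_qnum hq0 hq1 m
  rw [qnum_succ (sub_inv_ne_zero hq0 hq1)]
  push_cast
  nlinarith

end QNumbers

theorem dim1_pos (x : Word) : 0 < dim1 x :=
  List.prod_pos fun n hn => by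
    obtain ⟨b, -, rfl⟩ := List.mem_map.1 hn
    exact Nat.succ_pos _

theorem natCast_dim1 (x : Word) :
    (dim1 x : ℝ) = ((blocks x).map fun b => (b.length : ℝ) + 1).prod := by
  simp [dim1, Nat.cast_list_prod, Function.comp_def]

section Dimensions

variable {q : ℝ}

theorem dim1_le_dimq (hq0 : 0 < q) (hq1 : q ≠ 1) (x : Word) : (dim1 x : ℝ) ≤ dimq q x := by
  rw [natCast_dim1, dimq]
  refine List.prod_map_le_prod_map₀ _ _ (fun _ _ => by positivity) fun b _ => ?_
  exact_mod_cast natCast_le_qnum hq0 hq1 (b.length + 1)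

theorem dim1_lt_dimq (hq0 : 0 < q) (hq1 : q ≠ 1) {x : Word} (hx : x ≠ []) :
    (dim1 x : ℝ) < dimq q x := by
  rw [natCast_dim1, dimq]
  refine List.prod_map_lt_prod_map (mt blocks_eq_nil_iff.1 hx) _ _ (fun _ _ => by positivity)
    fun b hb => ?_
  have : 2 ≤ b.length + 1 := by
    have := List.length_pos_iff.2 (ne_nil_of_mem_blocks hb)
    omega
  exact_mod_cast natCast_lt_qnum hq0 hq1 this

theorem dimq_pos (hq0 : 0 < q) (hq1 : q ≠ 1) (x : Word) : 0 < dimq q x :=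
  (Nat.cast_pos.2 (dim1_pos x)).trans_le (dim1_le_dimq hq0 hq1 x)

noncomputable def dimRatio (q : ℝ) (x : Word) : ℝ := dim1 x / dimq q x

theorem dimRatio_pos (hq0 : 0 < q) (hq1 : q ≠ 1) (x : Word) : 0 < dimRatio q x :=
  div_pos (Nat.cast_pos.2 (dim1_pos x)) (dimq_pos hq0 hq1 x)

theorem dimRatio_le_one (hq0 : 0 < q) (hq1 : q ≠ 1) (x : Word) : dimRatio q x ≤ 1 :=
  div_le_one_of_le₀ (dim1_le_dimq hq0 hq1 x) (dimq_pos hq0 hq1 x).le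

theorem dimRatio_lt_one (hq0 : 0 < q) (hq1 : q ≠ 1) {x : Word} (hx : x ≠ []) :
    dimRatio q x < 1 :=
  (div_lt_one (dimq_pos hq0 hq1 x)).2 (dim1_lt_dimq hq0 hq1 hx)

end Dimensions

section RandomWalk

variable {q : ℝ} {μ : Word → ℝ}

theorem hasSum_rho (hq0 : 0 < q) (hq1 : q ≠ 1) (hμ0 : ∀ z, 0 ≤ μ z)
    (hμ : Summable μ) : HasSum (fun z => μ z * dimRatio q z) (rho q μ) := by
  have hsum : Summable (fun z => μ z * dimRatio q z) :=
    hμ.of_nonneg_of_le (fun z => mul_nonneg (hμ0 z) (dimRatio_pos hq0 hq1 z).le)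
      fun z => mul_le_of_le_one_right (hμ0 z) (dimRatio_le_one hq0 hq1 z)
  simpa only [rho, dimRatio, mul_div_assoc] using hsum.hasSum

theorem pker_eq_tsum (x y : Word) :
    pker q μ x y = ∑' z, μ z * (fm (wconj x) y z : ℝ) * dimq q y / (dimq q x * dimq q z) := by
  refine (tsum_eq_finsum ?_).symm
  refine ((fusionIdx (wconj x) y).image (fuse (wconj x) y)).finite_toSet.subset
    fun z hz => support_fm_subset _ _ (Function.mem_support.2 fun h => hz ?_)
  simp [h]

theorem pker_nonneg (hq0 : 0 < q) (hq1 : q ≠ 1) (hμ0 : ∀ z, 0 ≤ μ z)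
    (x y : Word) : 0 ≤ pker q μ x y :=
  finsum_nonneg fun z => div_nonneg
    (mul_nonneg (mul_nonneg (hμ0 z) (Nat.cast_nonneg _)) (dimq_pos hq0 hq1 y).le)
    (mul_pos (dimq_pos hq0 hq1 x) (dimq_pos hq0 hq1 z)).le

theorem hasSum_pker_mul_dimRatio (hq0 : 0 < q) (hq1 : q ≠ 1)
    (hμ0 : ∀ z, 0 ≤ μ z) (hμ : Summable μ) (x : Word) :
    HasSum (fun y => pker q μ x y * dimRatio q y) (dimRatio q x * rho q μ) := by
  have hx := (dimq_pos hq0 hq1 x).ne'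
  let F : Word → Word → ℝ := fun z y => μ z / (dimq q x * dimq q z) * (fm x z y * dim1 y)
  have hF : ∀ z y, 0 ≤ F z y := fun z y =>
    mul_nonneg (div_nonneg (hμ0 z) (mul_pos (dimq_pos hq0 hq1 x) (dimq_pos hq0 hq1 z)).le)
      (by positivity)
  have hrows : ∀ z, HasSum (F z) (dimRatio q x * (μ z * dimRatio q z)) := by
    intro z
    have hz := (dimq_pos hq0 hq1 z).ne'
    have h := (hasSum_fm_mul x z fun y => (dim1 y : ℝ)).mul_left (μ z / (dimq q x * dimq q z))
    rw [← Nat.cast_sum, sum_dim1_fuse] at h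
    have hval : μ z / (dimq q x * dimq q z) * ((dim1 x * dim1 z : ℕ) : ℝ) =
        dimRatio q x * (μ z * dimRatio q z) := by
      simp only [dimRatio]
      push_cast
      field_simp
    rwa [hval] at h
  have hcols : ∀ y, ∑' z, F z y = pker q μ x y * dimRatio q y := by
    intro y
    have hy := (dimq_pos hq0 hq1 y).ne'
    rw [pker_eq_tsum, ← tsum_mul_right]
    refine tsum_congr fun z => ?_
    have hz := (dimq_pos hq0 hq1 z).ne'
    rw [fm_wconj_left, dimRatio]
    simp only [F]
    field_simp
  simpa only [hcols] using hasSum_tsum_swap_of_nonneg hF hrows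
    ((hasSum_rho hq0 hq1 hμ0 hμ).mul_left (dimRatio q x))

theorem pn_succ_succ (n : ℕ) (x y : Word) :
    pn q μ (n + 2) x y = ∑' u, pn q μ (n + 1) x u * pker q μ u y := rfl

theorem pn_succ_nonneg (hq0 : 0 < q) (hq1 : q ≠ 1) (hμ0 : ∀ z, 0 ≤ μ z)
    (n : ℕ) (x y : Word) : 0 ≤ pn q μ (n + 1) x y := by
  induction n generalizing y with
  | zero => exact pker_nonneg hq0 hq1 hμ0 x y
  | succ n ih =>
    rw [pn_succ_succ]
    exact tsum_nonneg fun u => mul_nonneg (ih u) (pker_nonneg hq0 hq1 hμ0 u y)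

theorem hasSum_pn_mul_dimRatio (hq0 : 0 < q) (hq1 : q ≠ 1)
    (hμ0 : ∀ z, 0 ≤ μ z) (hμ : Summable μ) (n : ℕ) (x : Word) :
    HasSum (fun y => pn q μ (n + 1) x y * dimRatio q y) (dimRatio q x * rho q μ ^ (n + 1)) := by
  induction n with
  | zero =>
    rw [zero_add, pow_one]
    exact hasSum_pker_mul_dimRatio hq0 hq1 hμ0 hμ x
  | succ n ih =>
    let F : Word → Word → ℝ := fun u y => pn q μ (n + 1) x u * (pker q μ u y * dimRatio q y)
    have hF : ∀ u y, 0 ≤ F u y := fun u y =>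
      mul_nonneg (pn_succ_nonneg hq0 hq1 hμ0 n x u)
        (mul_nonneg (pker_nonneg hq0 hq1 hμ0 u y) (dimRatio_pos hq0 hq1 y).le)
    have hrows : ∀ u, HasSum (F u) (pn q μ (n + 1) x u * dimRatio q u * rho q μ) := fun u => by
      simpa only [mul_assoc] using (hasSum_pker_mul_dimRatio hq0 hq1 hμ0 hμ u).mul_left _
    have hcols : ∀ y, ∑' u, F u y = pn q μ (n + 2) x y * dimRatio q y := fun y => by
      simp only [F, pn_succ_succ, ← tsum_mul_right, mul_assoc]
    have := hasSum_tsum_swap_of_nonneg hF hrows (ih.mul_right (rho q μ))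
    rwa [funext hcols, mul_assoc, ← pow_succ] at this

theorem pn_succ_le (hq0 : 0 < q) (hq1 : q ≠ 1) (hμ0 : ∀ z, 0 ≤ μ z)
    (hμ : Summable μ) (n : ℕ) (x y : Word) :
    pn q μ (n + 1) x y ≤ dimRatio q x / dimRatio q y * rho q μ ^ (n + 1) := by
  have hy := dimRatio_pos hq0 hq1 y
  have := le_hasSum (hasSum_pn_mul_dimRatio hq0 hq1 hμ0 hμ n x) y fun u _ =>
    mul_nonneg (pn_succ_nonneg hq0 hq1 hμ0 n x u) (dimRatio_pos hq0 hq1 u).le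
  rw [div_mul_eq_mul_div, le_div_iff₀ hy]
  linarith

theorem rho_pos (hq0 : 0 < q) (hq1 : q ≠ 1) (hμ0 : ∀ z, 0 ≤ μ z)
    (hμ1 : HasSum μ 1) : 0 < rho q μ := by
  obtain ⟨z, hz⟩ : ∃ z, 0 < μ z := by
    by_contra! h
    have : μ = 0 := funext fun z => le_antisymm (h z) (hμ0 z)
    exact one_ne_zero (hμ1.unique (this ▸ hasSum_zero))
  exact (mul_pos hz (dimRatio_pos hq0 hq1 z)).trans_le <|
    le_hasSum (hasSum_rho hq0 hq1 hμ0 hμ1.summable) z fun u _ =>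
      mul_nonneg (hμ0 u) (dimRatio_pos hq0 hq1 u).le

theorem rho_lt_one (hq0 : 0 < q) (hq1 : q ≠ 1) (hμ0 : ∀ z, 0 ≤ μ z)
    (hμ1 : HasSum μ 1) (hε : μ [] < 1) : rho q μ < 1 := by
  obtain ⟨z, hz, hμz⟩ : ∃ z, z ≠ [] ∧ 0 < μ z := by
    by_contra! h
    have := hμ1.unique (hasSum_single [] fun z hz => le_antisymm (h z hz) (hμ0 z))
    linarith
  exact hasSum_lt (fun u => mul_le_of_le_one_right (hμ0 u) (dimRatio_le_one hq0 hq1 u))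
    (mul_lt_of_lt_one_right hμz (dimRatio_lt_one hq0 hq1 hz))
    (hasSum_rho hq0 hq1 hμ0 hμ1.summable) hμ1

end RandomWalk

/-- Transience of the random walk: if `μ` is a probability measure on `I`
with `μ(ε) < 1`, then `0 < ρ < 1` and `Σ_{n=1}^∞ p_n(x,y) < ∞` for all `x, y`. -/
theorem random_walk_transient (q : ℝ) (hq0 : 0 < q) (hq1 : q < 1)
    (μ : Word → ℝ) (hμ0 : ∀ z, 0 ≤ μ z) (hμ1 : HasSum μ 1) (hε : μ [] < 1) :
    0 < rho q μ ∧ rho q μ < 1 ∧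
    ∀ x y : Word, Summable (fun n : ℕ => pn q μ (n + 1) x y) := by
  have hq1' : q ≠ 1 := hq1.ne
  have hρ0 := rho_pos hq0 hq1' hμ0 hμ1
  have hρ1 := rho_lt_one hq0 hq1' hμ0 hμ1 hε
  refine ⟨hρ0, hρ1, fun x y => ?_⟩
  have hgeom : Summable fun n : ℕ => dimRatio q x / dimRatio q y * rho q μ ^ (n + 1) :=
    ((summable_nat_add_iff 1).2 (summable_geometric_of_lt_one hρ0.le hρ1)).mul_left _
  exact hgeom.of_nonneg_of_le (fun n => pn_succ_nonneg hq0 hq1' hμ0 n x y)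
    fun n => pn_succ_le hq0 hq1' hμ0 hμ1.summable n x y
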